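/- arXiv:1112.3402 — 6 statements merged into one kernel-verified Lean document; each statement's English description precedes it below -/
import Mathlib

section
/- For 1 ≤ i < j ≤ n, the rotation vector field θ_{ij} := x_j ∂_{x_i} − x_i ∂_{x_j} + ∑_{k<i}(y_{kj} ∂_{y_{ki}} − y_{ki} ∂_{y_{kj}}) + ∑_{i<k<j}(y_{ik} ∂_{y_{kj}} − y_{kj} ∂_{y_{ik}}) + ∑_{j<k≤n}(y_{jk} ∂_{y_{ik}} − y_{ik} ∂_{y_{jk}}) commutes with the sub-Laplacian Δ := ∑_{m=1}^n X_m², i.e. [Δ, θ_{ij}] = 0 on smooth functions. -/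
open Finset

noncomputable section

/-- The underlying space `ℝ^{n} × ℝ^{n×n}` (only the entries `y_{kl}` with `k < l` are used). -/
abbrev E (n : ℕ) : Type := (Fin n → ℝ) × (Fin n → Fin n → ℝ)

/-- Partial derivative in the direction `x_i`. -/
def px {n : ℕ} (i : Fin n) (f : E n → ℝ) (p : E n) : ℝ :=
  fderiv ℝ f p (Pi.single i 1, 0)

/-- Partial derivative in the direction `y_{kl}`. -/
def py {n : ℕ} (k l : Fin n) (f : E n → ℝ) (p : E n) : ℝ :=
  fderiv ℝ f p (0, Pi.single k (Pi.single l 1))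

/-- The canonical left-invariant vector field `X_i`. -/
def X {n : ℕ} (i : Fin n) (f : E n → ℝ) (p : E n) : ℝ :=
  px i f p + (1/2) * ((∑ k ∈ univ.filter (fun k => k < i), p.1 k * py k i f p)
    - ∑ k ∈ univ.filter (fun k => i < k), p.1 k * py i k f p)

/-- The right-invariant vector field `X̂_i`. -/
def Xhat {n : ℕ} (i : Fin n) (f : E n → ℝ) (p : E n) : ℝ :=
  px i f p - (1/2) * ((∑ k ∈ univ.filter (fun k => k < i), p.1 k * py k i f p)
    - ∑ k ∈ univ.filter (fun k => i < k), p.1 k * py i k f p)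

/-- The vertical vector field `Y_{ij} = ∂_{y_{ij}}`. -/
def Yf {n : ℕ} (i j : Fin n) (f : E n → ℝ) (p : E n) : ℝ := py i j f p

/-- The rotation vector field `θ_{ij}`. -/
def theta {n : ℕ} (i j : Fin n) (f : E n → ℝ) (p : E n) : ℝ :=
  p.1 j * px i f p - p.1 i * px j f p
  + (∑ k ∈ univ.filter (fun k => k < i), (p.2 k j * py k i f p - p.2 k i * py k j f p))
  + (∑ k ∈ univ.filter (fun k => i < k ∧ k < j), (p.2 i k * py k j f p - p.2 k j * py i k f p))
  + (∑ k ∈ univ.filter (fun k => j < k), (p.2 j k * py i k f p - p.2 i k * py j k f p))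

/-- The sub-Laplacian `Δ = ∑ X_i²`. -/
def subL {n : ℕ} (f : E n → ℝ) (p : E n) : ℝ := ∑ i, X i (X i f) p

end

noncomputable section Aux
open ContDiff

def D {n : ℕ} (v : E n) (f : E n → ℝ) (p : E n) : ℝ := fderiv ℝ f p v

lemma contDiff_D {n : ℕ} (v : E n) {f : E n → ℝ} (hf : ContDiff ℝ ∞ f) :
    ContDiff ℝ ∞ (D v f) :=
  (hf.fderiv_right (by simp)).clm_apply contDiff_const

lemma D_sym {n : ℕ} (v w : E n) {f : E n → ℝ} (hf : ContDiff ℝ ∞ f) (p : E n) :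
    D v (D w f) p = D w (D v f) p := by
  have h1 : ∀ u u' : E n, D u (D u' f) p = fderiv ℝ (fderiv ℝ f) p u u' := by
    intro u u'
    have hdf : DifferentiableAt ℝ (fderiv ℝ f) p :=
      ((hf.fderiv_right (m := ∞) (by simp)).differentiable (by simp)).differentiableAt
    show fderiv ℝ (fun q => fderiv ℝ f q u') p u = _
    rw [fderiv_clm_apply hdf (differentiableAt_const u')]
    simp
  rw [h1, h1]
  exact (hf.contDiffAt.isSymmSndFDerivAt (by simp; exact WithTop.coe_le_coe.2 le_top)).eq v w

lemma D_sub {n : ℕ} (v : E n) {f g : E n → ℝ} (hf : ContDiff ℝ ∞ f) (hg : ContDiff ℝ ∞ g)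
    (p : E n) : D v (fun q => f q - g q) p = D v f p - D v g p := by
  simp only [D]
  rw [fderiv_fun_sub (hf.differentiable (by simp)).differentiableAt
    (hg.differentiable (by simp)).differentiableAt]
  simp

lemma D_finsum {n : ℕ} {ι : Type*} (s : Finset ι) (v : E n) (g : ι → E n → ℝ)
    (hg : ∀ a, ContDiff ℝ ∞ (g a)) (p : E n) :
    D v (fun q => ∑ a ∈ s, g a q) p = ∑ a ∈ s, D v (g a) p := by
  simp only [D]
  rw [fderiv_fun_sum (fun a _ => ((hg a).differentiable (by simp)).differentiableAt)]
  simp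

lemma D_mul {n : ℕ} (v : E n) {f g : E n → ℝ} (hf : ContDiff ℝ ∞ f) (hg : ContDiff ℝ ∞ g)
    (p : E n) : D v (fun q => f q * g q) p = D v f p * g p + f p * D v g p := by
  simp only [D]
  rw [fderiv_fun_mul (hf.differentiable (by simp)).differentiableAt
    (hg.differentiable (by simp)).differentiableAt]
  simp
  ring

def opA {n : ℕ} {ι : Type*} [Fintype ι] (c : ι → E n → ℝ) (v : ι → E n)
    (f : E n → ℝ) (p : E n) : ℝ := ∑ a, c a p * D (v a) f p

lemma opA_contDiff {n : ℕ} {ι : Type*} [Fintype ι] (c : ι → E n → ℝ) (v : ι → E n)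
    {f : E n → ℝ} (hc : ∀ a, ContDiff ℝ ∞ (c a)) (hf : ContDiff ℝ ∞ f) :
    ContDiff ℝ ∞ (opA c v f) :=
  ContDiff.sum fun a _ => (hc a).mul (contDiff_D (v a) hf)

lemma D_opA {n : ℕ} {ι : Type*} [Fintype ι] (c : ι → E n → ℝ) (v : ι → E n)
    {f : E n → ℝ} (hc : ∀ a, ContDiff ℝ ∞ (c a)) (hf : ContDiff ℝ ∞ f) (u : E n) (p : E n) :
    D u (opA c v f) p = ∑ a, (D u (c a) p * D (v a) f p + c a p * D u (D (v a) f) p) := by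
  have h := D_finsum Finset.univ u (fun a q => c a q * D (v a) f q)
    (fun a => (hc a).mul (contDiff_D (v a) hf)) p
  refine h.trans (Finset.sum_congr rfl fun a _ => ?_)
  exact D_mul u (hc a) (contDiff_D (v a) hf) p

lemma opA_sub {n : ℕ} {ι : Type*} [Fintype ι] (c : ι → E n → ℝ) (v : ι → E n)
    {f g : E n → ℝ} (hf : ContDiff ℝ ∞ f) (hg : ContDiff ℝ ∞ g) (p : E n) :
    opA c v (fun q => f q - g q) p = opA c v f p - opA c v g p := by
  unfold opA
  rw [← Finset.sum_sub_distrib]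
  refine Finset.sum_congr rfl fun a _ => ?_
  rw [D_sub (v a) hf hg p]
  ring

lemma opA_finsum {n : ℕ} {ι κ : Type*} [Fintype ι] (s : Finset κ) (c : ι → E n → ℝ)
    (v : ι → E n) (g : κ → E n → ℝ) (hg : ∀ b, ContDiff ℝ ∞ (g b)) (p : E n) :
    opA c v (fun q => ∑ b ∈ s, g b q) p = ∑ b ∈ s, opA c v (g b) p := by
  unfold opA
  rw [Finset.sum_comm]
  refine Finset.sum_congr rfl fun a _ => ?_
  rw [D_finsum s (v a) g hg p, Finset.mul_sum]

lemma opA_bracket {n : ℕ} {ι κ : Type*} [Fintype ι] [Fintype κ]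
    (c1 : ι → E n → ℝ) (v1 : ι → E n) (c2 : κ → E n → ℝ) (v2 : κ → E n)
    (hc1 : ∀ a, ContDiff ℝ ∞ (c1 a)) (hc2 : ∀ b, ContDiff ℝ ∞ (c2 b))
    {f : E n → ℝ} (hf : ContDiff ℝ ∞ f) (p : E n) :
    opA c1 v1 (opA c2 v2 f) p - opA c2 v2 (opA c1 v1 f) p
    = ∑ a, ∑ b, (c1 a p * (D (v1 a) (c2 b) p * D (v2 b) f p)
        - c2 b p * (D (v2 b) (c1 a) p * D (v1 a) f p)) := by
  have e1 : opA c1 v1 (opA c2 v2 f) p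
      = ∑ a, ∑ b, (c1 a p * (D (v1 a) (c2 b) p * D (v2 b) f p)
          + c1 a p * (c2 b p * D (v1 a) (D (v2 b) f) p)) := by
    show ∑ a, c1 a p * D (v1 a) (opA c2 v2 f) p = _
    refine Finset.sum_congr rfl fun a _ => ?_
    rw [D_opA c2 v2 hc2 hf (v1 a) p, Finset.mul_sum]
    exact Finset.sum_congr rfl fun b _ => by ring
  have e2 : opA c2 v2 (opA c1 v1 f) p
      = ∑ a, ∑ b, (c2 b p * (D (v2 b) (c1 a) p * D (v1 a) f p)
          + c1 a p * (c2 b p * D (v1 a) (D (v2 b) f) p)) := by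
    show ∑ b, c2 b p * D (v2 b) (opA c1 v1 f) p = _
    rw [Finset.sum_comm]
    refine Finset.sum_congr rfl fun b _ => ?_
    rw [D_opA c1 v1 hc1 hf (v2 b) p, Finset.mul_sum]
    refine Finset.sum_congr rfl fun a _ => ?_
    rw [D_sym (v2 b) (v1 a) hf p]
    ring
  rw [e1, e2, ← Finset.sum_sub_distrib]
  refine Finset.sum_congr rfl fun a _ => ?_
  rw [← Finset.sum_sub_distrib]
  exact Finset.sum_congr rfl fun b _ => by ring

def ex {n : ℕ} (m : Fin n) : E n := (Pi.single m 1, 0)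
def ey {n : ℕ} (k l : Fin n) : E n := (0, Pi.single k (Pi.single l 1))
def sy {n : ℕ} (k l : Fin n) : E n :=
  if k < l then ey k l else if l < k then -(ey l k) else 0
def yc {n : ℕ} (a b : Fin n) (p : E n) : ℝ :=
  if a < b then p.2 a b else if b < a then -(p.2 b a) else 0
def del {n : ℕ} (a b : Fin n) : ℝ := if a = b then 1 else 0

def Lx {n : ℕ} (k : Fin n) : E n →L[ℝ] ℝ :=
  (ContinuousLinearMap.proj k).comp (ContinuousLinearMap.fst ℝ _ _)
def Ly {n : ℕ} (k l : Fin n) : E n →L[ℝ] ℝ :=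
  ((ContinuousLinearMap.proj (R := ℝ) (φ := fun _ : Fin n => ℝ) l).comp
    (ContinuousLinearMap.proj (R := ℝ) (φ := fun _ : Fin n => (Fin n → ℝ)) k)).comp
    (ContinuousLinearMap.snd ℝ (Fin n → ℝ) (Fin n → Fin n → ℝ))

lemma contDiff_x {n : ℕ} (k : Fin n) : ContDiff ℝ ∞ (fun p : E n => p.1 k) := by
  exact (Lx k).contDiff
lemma contDiff_y {n : ℕ} (k l : Fin n) : ContDiff ℝ ∞ (fun p : E n => p.2 k l) := by
  exact (Ly k l).contDiff
lemma contDiff_yc {n : ℕ} (a b : Fin n) : ContDiff ℝ ∞ (yc a b) := by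
  unfold yc
  split_ifs
  · exact contDiff_y a b
  · exact (contDiff_y b a).neg
  · exact contDiff_const

lemma D_neg_v {n : ℕ} (v : E n) (f : E n → ℝ) (p : E n) : D (-v) f p = -D v f p := by
  simp [D]
lemma D_smul_v {n : ℕ} (c : ℝ) (v : E n) (f : E n → ℝ) (p : E n) :
    D (c • v) f p = c * D v f p := by simp [D]
lemma D_one {n : ℕ} (v : E n) (p : E n) : D v (fun _ : E n => (1:ℝ)) p = 0 := by
  simp [D, fderiv_const_apply]

lemma Dx {n : ℕ} (v : E n) (k : Fin n) (p : E n) : D v (fun q => q.1 k) p = v.1 k := by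
  show fderiv ℝ (Lx k) p v = v.1 k
  rw [ContinuousLinearMap.fderiv]; rfl

lemma Dy {n : ℕ} (v : E n) (k l : Fin n) (p : E n) : D v (fun q => q.2 k l) p = v.2 k l := by
  show fderiv ℝ (Ly k l) p v = v.2 k l
  rw [ContinuousLinearMap.fderiv]; rfl

lemma yc_eq {n : ℕ} (a b : Fin n) :
    yc a b = fun p : E n => (if a < b then p.2 a b else if b < a then -(p.2 b a) else 0) := rfl

lemma Dyc {n : ℕ} (v : E n) (a b : Fin n) (p : E n) :
    D v (yc a b) p = if a < b then v.2 a b else if b < a then -(v.2 b a) else 0 := by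
  rcases lt_trichotomy a b with h | h | h
  · simp only [yc_eq, h, if_true, Dy]
  · subst h
    simp only [yc_eq, lt_self_iff_false, if_false]
    simp [D, fderiv_const_apply]
  · have h' : ¬ a < b := not_lt.2 h.le
    simp only [yc_eq, h, h', if_true, if_false]
    show fderiv ℝ (fun q : E n => -(q.2 b a)) p v = -(v.2 b a)
    rw [fderiv_fun_neg]
    simp only [ContinuousLinearMap.neg_apply, neg_inj]
    exact Dy v b a p

lemma sy_comm {n : ℕ} (k l : Fin n) : sy l k = -(sy k l) := by
  unfold sy
  rcases lt_trichotomy k l with h | h | h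
  · rw [if_neg (not_lt.2 h.le), if_pos h, if_pos h]
  · subst h; simp
  · rw [if_pos h, if_neg (not_lt.2 h.le), if_pos h, neg_neg]

lemma D_sy {n : ℕ} (k l : Fin n) (f : E n → ℝ) (p : E n) :
    D (sy k l) f p = if k < l then D (ey k l) f p else if l < k then -(D (ey l k) f p) else 0 := by
  unfold sy
  split_ifs
  · rfl
  · exact D_neg_v _ _ _
  · simp [D]

lemma sy_fst {n : ℕ} (k l : Fin n) : (sy k l).1 = 0 := by
  unfold sy ey; split_ifs <;> simp
lemma ex_snd {n : ℕ} (m : Fin n) : (ex m).2 = 0 := rfl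

lemma Dsyyc {n : ℕ} (k l a b : Fin n) (p : E n) :
    D (sy k l) (yc a b) p = del k a * del l b - del k b * del l a := by
  rw [Dyc]
  unfold sy ey del
  rcases lt_trichotomy a b with h1 | h1 | h1 <;> rcases lt_trichotomy k l with h2 | h2 | h2 <;>
    simp only [if_pos, if_neg, not_lt.2, h1, h2, lt_irrefl] <;>
    split_ifs <;>
    simp_all [Pi.single_apply] <;>
    omega

/-- Coefficients of `X m` as a generic operator. -/
def cX {n : ℕ} (a : Option (Fin n)) : E n → ℝ :=
  match a with
  | none => fun _ => 1
  | some k => fun p => p.1 k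

def vX {n : ℕ} (m : Fin n) (a : Option (Fin n)) : E n :=
  match a with
  | none => ex m
  | some k => (1/2 : ℝ) • sy k m

lemma hcX {n : ℕ} : ∀ a : Option (Fin n), ContDiff ℝ ∞ (cX a) := by
  rintro (_ | k)
  · exact contDiff_const
  · exact contDiff_x k

/-- Coefficients of `theta i j` as a generic operator. -/
def cT {n : ℕ} (i j : Fin n) (b : Bool ⊕ (Bool × Fin n)) : E n → ℝ :=
  match b with
  | .inl true => fun p => p.1 j
  | .inl false => fun p => p.1 i
  | .inr (true, k) => yc k j
  | .inr (false, k) => yc k i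

def vT {n : ℕ} (i j : Fin n) (b : Bool ⊕ (Bool × Fin n)) : E n :=
  match b with
  | .inl true => ex i
  | .inl false => -(ex j)
  | .inr (true, k) => sy k i
  | .inr (false, k) => -(sy k j)

lemma hcT {n : ℕ} (i j : Fin n) : ∀ b, ContDiff ℝ ∞ (cT i j b) := by
  rintro ((_|_) | ⟨_|_, k⟩)
  · exact contDiff_x i
  · exact contDiff_x j
  · exact contDiff_yc k i
  · exact contDiff_yc k j

lemma px_eq {n : ℕ} (m : Fin n) (f : E n → ℝ) (p : E n) : px m f p = D (ex m) f p := rfl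
lemma py_eq {n : ℕ} (k l : Fin n) (f : E n → ℝ) (p : E n) : py k l f p = D (ey k l) f p := rfl

lemma X_rep {n : ℕ} (m : Fin n) (f : E n → ℝ) (p : E n) :
    X m f p = opA cX (vX m) f p := by
  unfold X opA
  rw [Fintype.sum_option]
  simp only [cX, vX, one_mul, D_smul_v]
  rw [Finset.sum_filter, Finset.sum_filter, ← Finset.sum_sub_distrib, Finset.mul_sum]
  rw [← px_eq]
  congr 1
  refine Finset.sum_congr rfl fun k _ => ?_
  rw [D_sy]
  rcases lt_trichotomy k m with h | h | h
  · simp only [h, not_lt.2 h.le, if_true, if_false, ← py_eq]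
    ring
  · subst h
    simp
  · simp only [h, not_lt.2 h.le, if_true, if_false, ← py_eq]
    ring

lemma theta_rep {n : ℕ} (i j : Fin n) (hij : i < j) (f : E n → ℝ) (p : E n) :
    theta i j f p = opA (cT i j) (vT i j) f p := by
  have hji : ¬ j < i := not_lt.2 hij.le
  have h1 : theta i j f p = p.1 j * px i f p - p.1 i * px j f p
      + ∑ k : Fin n,
        ((if k < i then (p.2 k j * py k i f p - p.2 k i * py k j f p) else 0)
          + (if i < k ∧ k < j then (p.2 i k * py k j f p - p.2 k j * py i k f p) else 0)
          + (if j < k then (p.2 j k * py i k f p - p.2 i k * py j k f p) else 0)) := by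
    unfold theta
    rw [Finset.sum_filter, Finset.sum_filter, Finset.sum_filter,
      Finset.sum_add_distrib, Finset.sum_add_distrib]
    ring
  have h2 : opA (cT i j) (vT i j) f p = p.1 j * D (ex i) f p - p.1 i * D (ex j) f p
      + ∑ k : Fin n,
        (yc k j p * D (sy k i) f p + yc k i p * (-(D (sy k j) f p))) := by
    unfold opA
    rw [Fintype.sum_sum_type, Fintype.sum_bool, Fintype.sum_prod_type, Fintype.sum_bool]
    simp only [cT, vT, D_neg_v]
    rw [Finset.sum_add_distrib]
    ring
  rw [h1, h2, px_eq i f p, px_eq j f p]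
  congr 1
  refine Finset.sum_congr rfl fun k _ => ?_
  rcases lt_trichotomy k i with h | h | h
  · have h' : k < j := h.trans hij
    simp only [yc, D_sy, h, h', not_lt.2 h.le, not_lt.2 h'.le, if_true, if_false,
      false_and, ← py_eq]
    ring
  · subst h
    simp only [yc, D_sy, lt_self_iff_false, lt_irrefl, if_false, hij, hji, if_true,
      false_and, and_false, true_and, ← py_eq]
    ring
  · rcases lt_trichotomy k j with h2 | h2 | h2
    · simp only [yc, D_sy, h, h2, not_lt.2 h.le, not_lt.2 h2.le, if_true, if_false,
        and_true, true_and, ← py_eq]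
      ring
    · subst h2
      simp only [yc, D_sy, lt_self_iff_false, if_false, h, hji, not_lt.2 h.le, if_true,
        and_false, false_and, ← py_eq]
      ring
    · have h' : i < k := h
      simp only [yc, D_sy, h, h2, not_lt.2 h.le, not_lt.2 h2.le, if_true, if_false,
        and_false, false_and, ← py_eq]
      ring

lemma Dexx {n : ℕ} (m k : Fin n) (p : E n) :
    D (ex m) (fun q => q.1 k) p = del k m := by
  rw [Dx]; simp [ex, del, Pi.single_apply]

lemma Dsyx {n : ℕ} (k l a : Fin n) (p : E n) :
    D (sy k l) (fun q => q.1 a) p = 0 := by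
  rw [Dx, sy_fst]; rfl

lemma Dexyc {n : ℕ} (m a b : Fin n) (p : E n) :
    D (ex m) (yc a b) p = 0 := by
  rw [Dyc]
  have : (ex m).2 = 0 := rfl
  rw [this]
  split_ifs <;> simp

lemma D_zero_v {n : ℕ} (f : E n → ℝ) (p : E n) : D (0 : E n) f p = 0 := by simp [D]

lemma sy_diag {n : ℕ} (k : Fin n) : sy k k = (0 : E n) := by unfold sy; simp

lemma opA_zero {n : ℕ} {ι : Type*} [Fintype ι] (c : ι → E n → ℝ) (v : ι → E n) (p : E n) :
    opA c v (fun _ : E n => (0:ℝ)) p = 0 := by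
  unfold opA
  simp [D, fderiv_const_apply]

lemma key {n : ℕ} (i j : Fin n) (hij : i < j) {f : E n → ℝ} (hf : ContDiff ℝ ∞ f)
    (m : Fin n) (p : E n) :
    opA cX (vX m) (opA (cT i j) (vT i j) f) p - opA (cT i j) (vT i j) (opA cX (vX m) f) p
    = (if m = j then opA cX (vX i) f p else 0) - (if m = i then opA cX (vX j) f p else 0) := by
  rw [opA_bracket cX (vX m) (cT i j) (vT i j) hcX (hcT i j) hf p]
  rw [Fintype.sum_option]
  simp only [Fintype.sum_sum_type, Fintype.sum_bool, Fintype.sum_prod_type]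
  simp only [cX, vX, cT, vT, D_smul_v, D_neg_v, D_one, Dexx, Dsyx, Dexyc, Dsyyc]
  simp only [mul_zero, zero_mul, mul_one, one_mul, neg_zero, add_zero, zero_add, sub_zero,
    zero_sub, mul_neg, neg_mul, neg_neg]
  simp only [Finset.sum_const_zero, add_zero, zero_add]
  simp only [del, mul_ite, ite_mul, mul_zero, zero_mul, mul_one, one_mul, neg_zero, sub_zero,
    zero_sub, mul_neg, neg_mul, neg_neg, Finset.sum_sub_distrib, Finset.sum_add_distrib,
    Finset.sum_ite_eq, Finset.sum_ite_eq', Finset.mem_univ, if_true]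
  simp only [opA, Fintype.sum_option, cX, vX, D_smul_v, one_mul]
  have hQii : D (sy i i) f p = 0 := by rw [sy_diag]; exact D_zero_v f p
  have hQjj : D (sy j j) f p = 0 := by rw [sy_diag]; exact D_zero_v f p
  have hQji : D (sy j i) f p = -(D (sy i j) f p) := by rw [sy_comm i j, D_neg_v]
  have hQmi : D (sy m i) f p = -(D (sy i m) f p) := by rw [sy_comm i m, D_neg_v]
  have hQmj : D (sy m j) f p = -(D (sy j m) f p) := by rw [sy_comm j m, D_neg_v]
  rcases eq_or_ne m i with rfl | hmi
  · simp only [if_pos rfl, if_neg (hij.ne' : j ≠ m), if_neg (hij.ne : ¬ (m = j)),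
      eq_self_iff_true, if_true]
    simp only [hQii, hQjj, hij.ne, hij.ne', mul_zero, zero_mul, mul_one, one_mul, add_zero,
      zero_add, sub_zero, zero_sub, neg_zero, mul_neg, neg_mul, neg_neg, mul_ite, ite_mul,
      neg_sub, if_pos rfl, if_false, mul_sub, sub_mul, Finset.sum_sub_distrib, Finset.sum_add_distrib,
      Finset.sum_neg_distrib, Finset.sum_ite_eq, Finset.sum_ite_eq', Finset.mem_univ, if_true]
    rw [hQji]
    ring
  · rcases eq_or_ne m j with rfl | hmj
    · simp only [hQii, hQjj, hij.ne, hij.ne', mul_zero, zero_mul, mul_one, one_mul, add_zero,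
      zero_add, sub_zero, zero_sub, neg_zero, mul_neg, neg_mul, neg_neg, mul_ite, ite_mul,
      neg_sub, if_pos rfl, if_false, mul_sub, sub_mul, Finset.sum_sub_distrib, Finset.sum_add_distrib,
      Finset.sum_neg_distrib, Finset.sum_ite_eq, Finset.sum_ite_eq', Finset.mem_univ, if_true]
      rw [hQji]
      ring
    · simp only [hQii, hQjj, hij.ne, hij.ne', mul_zero, zero_mul, mul_one, one_mul, add_zero,
      zero_add, sub_zero, zero_sub, neg_zero, mul_neg, neg_mul, neg_neg, mul_ite, ite_mul,
      neg_sub, if_pos rfl, if_false, mul_sub, sub_mul, Finset.sum_sub_distrib, Finset.sum_add_distrib,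
      Finset.sum_neg_distrib, Finset.sum_ite_eq, Finset.sum_ite_eq', Finset.mem_univ, if_true]
      simp only [if_neg hmi, if_neg hmj, if_neg (Ne.symm hmi), if_neg (Ne.symm hmj),
        Finset.sum_const_zero, add_zero, zero_add, sub_zero, zero_sub]
      rw [hQmi, hQmj]
      ring

end Aux

theorem theta_commutes_with_subLaplacian {n : ℕ} (i j : Fin n) (hij : i < j)
    (f : E n → ℝ) (hf : ContDiff ℝ (⊤ : ℕ∞) f) (p : E n) :
    subL (theta i j f) p - theta i j (subL f) p = 0 := by
  have hf' : ContDiff ℝ (((⊤ : ℕ∞) : WithTop ℕ∞)) f := hf.of_le (by simp)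
  have hX : ∀ (m : Fin n) (g : E n → ℝ), X m g = opA cX (vX m) g :=
    fun m g => funext (X_rep m g)
  have hT : ∀ g : E n → ℝ, theta i j g = opA (cT i j) (vT i j) g :=
    fun g => funext (theta_rep i j hij g)
  have hXs : ∀ (m : Fin n) {g : E n → ℝ}, ContDiff ℝ (((⊤ : ℕ∞) : WithTop ℕ∞)) g →
      ContDiff ℝ (((⊤ : ℕ∞) : WithTop ℕ∞)) (opA cX (vX m) g) :=
    fun m {g} hg => opA_contDiff _ _ hcX hg
  have hTs : ∀ {g : E n → ℝ}, ContDiff ℝ (((⊤ : ℕ∞) : WithTop ℕ∞)) g →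
      ContDiff ℝ (((⊤ : ℕ∞) : WithTop ℕ∞)) (opA (cT i j) (vT i j) g) :=
    fun {g} hg => opA_contDiff _ _ (hcT i j) hg
  have hsub : subL f = fun q => ∑ m : Fin n, opA cX (vX m) (opA cX (vX m) f) q := by
    funext q; simp only [subL, hX]
  have e0 : subL (theta i j f) p
      = ∑ m : Fin n, opA cX (vX m) (opA cX (vX m) (opA (cT i j) (vT i j) f)) p := by
    simp only [subL, hX, hT]
  have e1 : theta i j (subL f) p
      = ∑ m : Fin n, opA (cT i j) (vT i j) (opA cX (vX m) (opA cX (vX m) f)) p := by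
    rw [hT, hsub, opA_finsum _ _ _ _ (fun m => hXs m (hXs m hf'))]
  rw [e0, e1, ← Finset.sum_sub_distrib]
  set A : ℝ := -(opA cX (vX i) (opA cX (vX j) f) p) - opA cX (vX j) (opA cX (vX i) f) p with hA
  set B : ℝ := opA cX (vX j) (opA cX (vX i) f) p + opA cX (vX i) (opA cX (vX j) f) p with hB
  have hterm : ∀ m : Fin n,
      opA cX (vX m) (opA cX (vX m) (opA (cT i j) (vT i j) f)) p
        - opA (cT i j) (vT i j) (opA cX (vX m) (opA cX (vX m) f)) p
      = (if m = i then A else if m = j then B else 0) := by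
    intro m
    have hfm : ContDiff ℝ (((⊤ : ℕ∞) : WithTop ℕ∞)) (opA cX (vX m) f) := hXs m hf'
    have h2 := key i j hij hfm m p
    have hstep : opA cX (vX m) (opA cX (vX m) (opA (cT i j) (vT i j) f)) p
        - opA cX (vX m) (opA (cT i j) (vT i j) (opA cX (vX m) f)) p
        = opA cX (vX m) (fun q => (if m = j then opA cX (vX i) f q else 0)
            - (if m = i then opA cX (vX j) f q else 0)) p := by
      rw [show (fun q => (if m = j then opA cX (vX i) f q else 0)
            - (if m = i then opA cX (vX j) f q else 0))
          = fun q => opA cX (vX m) (opA (cT i j) (vT i j) f) q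
            - opA (cT i j) (vT i j) (opA cX (vX m) f) q
        from (funext fun q => (key i j hij hf' m q).symm)]
      exact (opA_sub cX (vX m) (hXs m (hTs hf')) (hTs hfm) p).symm
    have hsplit : opA cX (vX m) (opA cX (vX m) (opA (cT i j) (vT i j) f)) p
        - opA (cT i j) (vT i j) (opA cX (vX m) (opA cX (vX m) f)) p
        = (opA cX (vX m) (opA cX (vX m) (opA (cT i j) (vT i j) f)) p
            - opA cX (vX m) (opA (cT i j) (vT i j) (opA cX (vX m) f)) p)
          + (opA cX (vX m) (opA (cT i j) (vT i j) (opA cX (vX m) f)) p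
            - opA (cT i j) (vT i j) (opA cX (vX m) (opA cX (vX m) f)) p) := by ring
    rw [hsplit, hstep, h2]
    rcases eq_or_ne m i with rfl | hmi
    · have hmj : m ≠ j := hij.ne
      simp only [if_neg hmj, eq_self_iff_true, if_true]
      rw [show (fun q => (0:ℝ) - opA cX (vX j) f q)
          = fun q => (fun _ : E n => (0:ℝ)) q - opA cX (vX j) f q from rfl]
      rw [opA_sub cX (vX m) contDiff_const (hXs j hf') p, opA_zero, hA]
      ring
    · rcases eq_or_ne m j with rfl | hmj
      · simp only [if_neg hmi, eq_self_iff_true, if_true]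
        rw [show (fun q => opA cX (vX i) f q - (0:ℝ))
            = fun q => opA cX (vX i) f q - (fun _ : E n => (0:ℝ)) q from rfl]
        rw [opA_sub cX (vX m) (hXs i hf') contDiff_const p, opA_zero, hB]
        ring
      · simp only [if_neg hmi, if_neg hmj]
        rw [show (fun _ : E n => (0:ℝ) - (0:ℝ)) = fun _ : E n => (0:ℝ) from by
          funext q; ring]
        rw [opA_zero]
        ring
  rw [Finset.sum_congr rfl (fun m _ => hterm m)]
  have hsplit2 : ∀ m : Fin n, (if m = i then A else if m = j then B else 0)
      = (if m = i then A else 0) + (if m = j then B else 0) := by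
    intro m
    rcases eq_or_ne m i with rfl | h1
    · simp only [eq_self_iff_true, if_true, if_neg hij.ne]
      ring
    · rw [if_neg h1, if_neg h1, zero_add]
  rw [Finset.sum_congr rfl (fun m _ => hsplit2 m), Finset.sum_add_distrib,
    Finset.sum_ite_eq' Finset.univ i (fun _ => A), Finset.sum_ite_eq' Finset.univ j (fun _ => B),
    if_pos (Finset.mem_univ i), if_pos (Finset.mem_univ j)]
  rw [hA, hB]
  ring
end

section
/- Let f be a smooth radial function on ℝ^{n + n(n−1)/2}, i.e. θ_{ij} f = 0 for all 1 ≤ i < j ≤ n. Then ∑_{i=1}^n (X_i f)² = ∑_{i=1}^n (X̂_i f)², where X_i and X̂_i are the left- and right-invariant vector fields respectively. -/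
open Finset

private lemma ite_sum' {α : Type*} {c : Prop} [Decidable c] (s : Finset α) (h : α → ℝ) :
    (if c then ∑ m ∈ s, h m else 0) = ∑ m ∈ s, if c then h m else 0 := by
  split <;> simp

private lemma sum_rot {n : ℕ} (F : Fin n → Fin n → Fin n → ℝ) :
    ∑ i, ∑ j, ∑ m, F i j m = ∑ m, ∑ i, ∑ j, F i j m := by
  calc ∑ i, ∑ j, ∑ m, F i j m = ∑ i, ∑ m, ∑ j, F i j m :=
        Finset.sum_congr rfl fun _ _ => Finset.sum_comm
    _ = ∑ m, ∑ i, ∑ j, F i j m := Finset.sum_comm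

private lemma sum_swap_inner {n : ℕ} (F : Fin n → Fin n → Fin n → ℝ) :
    ∑ i, ∑ j, ∑ m, F i j m = ∑ i, ∑ m, ∑ j, F i j m :=
  Finset.sum_congr rfl fun _ _ => Finset.sum_comm

private lemma triple_cancel {n : ℕ} (y gy : Fin n → Fin n → ℝ) :
    (∑ i, ∑ j ∈ univ.filter (fun j => i < j), ∑ m ∈ univ.filter (fun m => m < i),
        (y m j * gy m i - y m i * gy m j) * gy i j)
    + (∑ i, ∑ j ∈ univ.filter (fun j => i < j), ∑ m ∈ univ.filter (fun m => i < m ∧ m < j),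
        (y i m * gy m j - y m j * gy i m) * gy i j)
    + (∑ i, ∑ j ∈ univ.filter (fun j => i < j), ∑ m ∈ univ.filter (fun m => j < m),
        (y j m * gy i m - y i m * gy j m) * gy i j) = 0 := by
  simp only [Finset.sum_filter, ite_sum']
  rw [sum_rot (fun i j m => if i < j then if m < i then (y m j * gy m i - y m i * gy m j) * gy i j else 0 else 0),
    sum_swap_inner (fun i j m => if i < j then if i < m ∧ m < j then (y i m * gy m j - y m j * gy i m) * gy i j else 0 else 0)]
  simp only [← Finset.sum_add_distrib]
  refine Finset.sum_eq_zero fun a _ => Finset.sum_eq_zero fun b _ => Finset.sum_eq_zero fun c _ => ?_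
  by_cases hab : a < b <;> by_cases hbc : b < c
  · simp only [hab, hbc, hab.trans hbc, and_self, if_true, true_and]
    ring
  · simp [hab, hbc]
  · simp [hab, hbc]
  · simp [hab, hbc]

private lemma key_alg {n : ℕ} (x gx : Fin n → ℝ) (y gy : Fin n → Fin n → ℝ)
    (hr : ∀ i j : Fin n, i < j →
      x i * gx j - x j * gx i =
      (∑ k ∈ univ.filter (fun k => k < i), (y k j * gy k i - y k i * gy k j))
      + (∑ k ∈ univ.filter (fun k => i < k ∧ k < j), (y i k * gy k j - y k j * gy i k))
      + (∑ k ∈ univ.filter (fun k => j < k), (y j k * gy i k - y i k * gy j k))) :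
    ∑ i, gx i * ((∑ k ∈ univ.filter (fun k => k < i), x k * gy k i)
      - ∑ k ∈ univ.filter (fun k => i < k), x k * gy i k) = 0 := by
  have h1 : ∑ i, gx i * (∑ k ∈ univ.filter (fun k => k < i), x k * gy k i)
      = ∑ i, ∑ k ∈ univ.filter (fun k => i < k), gx k * (x i * gy i k) := by
    simp only [Finset.mul_sum, Finset.sum_filter]
    rw [Finset.sum_comm]
    simp only [mul_ite, mul_zero]
  have h2 : ∑ i, gx i * ((∑ k ∈ univ.filter (fun k => k < i), x k * gy k i)
      - ∑ k ∈ univ.filter (fun k => i < k), x k * gy i k)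
      = ∑ i, ∑ k ∈ univ.filter (fun k => i < k), (x i * gx k - x k * gx i) * gy i k := by
    calc ∑ i, gx i * ((∑ k ∈ univ.filter (fun k => k < i), x k * gy k i)
        - ∑ k ∈ univ.filter (fun k => i < k), x k * gy i k)
        = (∑ i, gx i * (∑ k ∈ univ.filter (fun k => k < i), x k * gy k i))
          - ∑ i, gx i * (∑ k ∈ univ.filter (fun k => i < k), x k * gy i k) := by
          simp only [mul_sub, Finset.sum_sub_distrib]
      _ = (∑ i, ∑ k ∈ univ.filter (fun k => i < k), gx k * (x i * gy i k))
          - ∑ i, ∑ k ∈ univ.filter (fun k => i < k), gx i * (x k * gy i k) := by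
          rw [h1]; simp only [Finset.mul_sum]
      _ = ∑ i, ∑ k ∈ univ.filter (fun k => i < k),
            (gx k * (x i * gy i k) - gx i * (x k * gy i k)) := by
          rw [← Finset.sum_sub_distrib]
          exact Finset.sum_congr rfl fun i _ => (Finset.sum_sub_distrib _ _).symm
      _ = ∑ i, ∑ k ∈ univ.filter (fun k => i < k), (x i * gx k - x k * gx i) * gy i k :=
          Finset.sum_congr rfl fun i _ => Finset.sum_congr rfl fun k _ => by ring
  rw [h2]
  have h3 : ∑ i, ∑ k ∈ univ.filter (fun k => i < k), (x i * gx k - x k * gx i) * gy i k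
      = (∑ i, ∑ j ∈ univ.filter (fun j => i < j), ∑ m ∈ univ.filter (fun m => m < i),
          (y m j * gy m i - y m i * gy m j) * gy i j)
        + (∑ i, ∑ j ∈ univ.filter (fun j => i < j), ∑ m ∈ univ.filter (fun m => i < m ∧ m < j),
          (y i m * gy m j - y m j * gy i m) * gy i j)
        + (∑ i, ∑ j ∈ univ.filter (fun j => i < j), ∑ m ∈ univ.filter (fun m => j < m),
          (y j m * gy i m - y i m * gy j m) * gy i j) := by
    simp only [← Finset.sum_add_distrib]
    refine Finset.sum_congr rfl fun i _ => Finset.sum_congr rfl fun j hj => ?_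
    have hij : i < j := (Finset.mem_filter.mp hj).2
    rw [hr i j hij, add_mul, add_mul, Finset.sum_mul, Finset.sum_mul, Finset.sum_mul]
  rw [h3, triple_cancel]

theorem radial_gradients_agree {n : ℕ} (f : E n → ℝ) (hf : ContDiff ℝ (⊤ : ℕ∞) f)
    (hrad : ∀ i j : Fin n, i < j → ∀ q, theta i j f q = 0) (p : E n) :
    ∑ i, (X i f p)^2 = ∑ i, (Xhat i f p)^2 := by
  have hr : ∀ i j : Fin n, i < j →
      p.1 i * px j f p - p.1 j * px i f p =
      (∑ k ∈ univ.filter (fun k => k < i), (p.2 k j * py k i f p - p.2 k i * py k j f p))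
      + (∑ k ∈ univ.filter (fun k => i < k ∧ k < j), (p.2 i k * py k j f p - p.2 k j * py i k f p))
      + (∑ k ∈ univ.filter (fun k => j < k), (p.2 j k * py i k f p - p.2 i k * py j k f p)) := by
    intro i j hij
    have h := hrad i j hij p
    unfold theta at h
    linarith
  have key := key_alg (fun i => p.1 i) (fun i => px i f p) (fun i j => p.2 i j)
    (fun i j => py i j f p) hr
  calc ∑ i, (X i f p)^2
      = ∑ i, ((Xhat i f p)^2 + 2 * (px i f p *
          ((∑ k ∈ univ.filter (fun k => k < i), p.1 k * py k i f p)
            - ∑ k ∈ univ.filter (fun k => i < k), p.1 k * py i k f p))) := by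
        refine Finset.sum_congr rfl fun i _ => ?_
        unfold X Xhat
        ring
    _ = ∑ i, (Xhat i f p)^2 + 2 * ∑ i, px i f p *
          ((∑ k ∈ univ.filter (fun k => k < i), p.1 k * py k i f p)
            - ∑ k ∈ univ.filter (fun k => i < k), p.1 k * py i k f p) := by
        rw [Finset.sum_add_distrib, Finset.mul_sum]
    _ = ∑ i, (Xhat i f p)^2 := by rw [key]; ring
end

section
/- For any smooth function f on ℝ^{n + n(n−1)/2}, the sum ∑_{1≤i<j≤n} ∂_{y_{ij}} f · [ ∑_{k<i}(y_{kj} ∂_{y_{ki}} f − y_{ki} ∂_{y_{kj}} f) + ∑_{i<k<j}(y_{ik} ∂_{y_{kj}} f − y_{kj} ∂_{y_{ik}} f) + ∑_{j<k≤n}(y_{jk} ∂_{y_{ik}} f − y_{ik} ∂_{y_{jk}} f) ] equals zero. -/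
open Finset

theorem aux_cancel {n : ℕ} (a b : Fin n → Fin n → ℝ) :
    ∑ i, ∑ j ∈ univ.filter (fun j => i < j), a i j *
      ((∑ k ∈ univ.filter (fun k => k < i), (b k j * a k i - b k i * a k j))
       + (∑ k ∈ univ.filter (fun k => i < k ∧ k < j), (b i k * a k j - b k j * a i k))
       + (∑ k ∈ univ.filter (fun k => j < k), (b j k * a i k - b i k * a j k)))
    = 0 := by
  have step1 : (∑ i, ∑ j ∈ univ.filter (fun j => i < j), a i j *
      ((∑ k ∈ univ.filter (fun k => k < i), (b k j * a k i - b k i * a k j))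
       + (∑ k ∈ univ.filter (fun k => i < k ∧ k < j), (b i k * a k j - b k j * a i k))
       + (∑ k ∈ univ.filter (fun k => j < k), (b j k * a i k - b i k * a j k)))) =
      (∑ i, ∑ j, ∑ k, if i < j ∧ k < i then a i j * (b k j * a k i - b k i * a k j) else 0)
    + (∑ i, ∑ j, ∑ k, if i < j ∧ (i < k ∧ k < j) then a i j * (b i k * a k j - b k j * a i k) else 0)
    + (∑ i, ∑ j, ∑ k, if i < j ∧ j < k then a i j * (b j k * a i k - b i k * a j k) else 0) := by
    rw [← Finset.sum_add_distrib, ← Finset.sum_add_distrib]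
    refine Finset.sum_congr rfl fun i _ => ?_
    rw [← Finset.sum_add_distrib, ← Finset.sum_add_distrib, Finset.sum_filter]
    refine Finset.sum_congr rfl fun j _ => ?_
    by_cases h : i < j
    · simp only [h, true_and, if_true, Finset.sum_filter, Finset.mul_sum, mul_add,
        mul_ite, mul_zero, Finset.sum_add_distrib]
    · simp [h]
  rw [step1]
  have e1 : (∑ i, ∑ j, ∑ k, if i < j ∧ k < i then a i j * (b k j * a k i - b k i * a k j) else 0)
      = ∑ r, ∑ s, ∑ t : Fin n, if r < s ∧ s < t then a s t * (b r t * a r s - b r s * a r t) else 0 := by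
    rw [show (∑ i, ∑ j, ∑ k, if i < j ∧ k < i then a i j * (b k j * a k i - b k i * a k j) else 0)
        = ∑ i, ∑ k, ∑ j : Fin n, if i < j ∧ k < i then a i j * (b k j * a k i - b k i * a k j) else 0 from
      Finset.sum_congr rfl fun _ _ => Finset.sum_comm, Finset.sum_comm]
    exact Finset.sum_congr rfl fun r _ => Finset.sum_congr rfl fun s _ =>
      Finset.sum_congr rfl fun t _ => if_congr and_comm rfl rfl
  have e2 : (∑ i, ∑ j, ∑ k, if i < j ∧ (i < k ∧ k < j) then a i j * (b i k * a k j - b k j * a i k) else 0)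
      = ∑ r, ∑ s, ∑ t : Fin n, if r < s ∧ s < t then a r t * (b r s * a s t - b s t * a r s) else 0 := by
    refine Finset.sum_congr rfl fun r _ => ?_
    rw [Finset.sum_comm]
    refine Finset.sum_congr rfl fun s _ => Finset.sum_congr rfl fun t _ => ?_
    refine if_congr ⟨fun h => ⟨h.2.1, h.2.2⟩, fun h => ⟨h.1.trans h.2, h.1, h.2⟩⟩ rfl rfl
  rw [e1, e2, ← Finset.sum_add_distrib, ← Finset.sum_add_distrib]
  refine Finset.sum_eq_zero fun r _ => ?_
  rw [← Finset.sum_add_distrib, ← Finset.sum_add_distrib]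
  refine Finset.sum_eq_zero fun s _ => ?_
  rw [← Finset.sum_add_distrib, ← Finset.sum_add_distrib]
  refine Finset.sum_eq_zero fun t _ => ?_
  split_ifs
  · ring
  · simp

theorem triple_sum_cancellation {n : ℕ} (f : E n → ℝ) (hf : ContDiff ℝ (⊤ : ℕ∞) f) (p : E n) :
    ∑ i, ∑ j ∈ univ.filter (fun j => i < j), py i j f p *
      ((∑ k ∈ univ.filter (fun k => k < i), (p.2 k j * py k i f p - p.2 k i * py k j f p))
       + (∑ k ∈ univ.filter (fun k => i < k ∧ k < j), (p.2 i k * py k j f p - p.2 k j * py i k f p))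
       + (∑ k ∈ univ.filter (fun k => j < k), (p.2 j k * py i k f p - p.2 i k * py j k f p)))
    = 0 :=
  aux_cancel (fun i j => py i j f p) p.2
end

section
/- Let f be a smooth function on ℝ^{n + n(n−1)/2} that is radial, i.e. θ_{ij} f = 0 for all 1 ≤ i < j ≤ n. Then ∑_{i=1}^n ∂_{x_i} f · (∑_{k<i} x_k ∂_{y_{ki}} f − ∑_{k>i} x_k ∂_{y_{ik}} f) = 0. -/
open Finset

private lemma sum_antisymm {n : ℕ} (F : Fin n → Fin n → ℝ)
    (hF : ∀ a b, F b a = -F a b) : ∑ i, ∑ k, F i k = 0 := by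
  have hcomm : (∑ i, ∑ k, F i k) = ∑ i, ∑ k, F k i := Finset.sum_comm
  have h2 : (∑ i, ∑ k, F i k) + (∑ i, ∑ k, F i k) = 0 := by
    nth_rewrite 2 [hcomm]
    rw [← Finset.sum_add_distrib]
    refine Finset.sum_eq_zero fun i _ => ?_
    rw [← Finset.sum_add_distrib]
    refine Finset.sum_eq_zero fun k _ => ?_
    rw [hF i k]; ring
  linarith

private lemma triple_comm {n : ℕ} (G : Fin n → Fin n → Fin n → ℝ) :
    (∑ i, ∑ k, ∑ m, G i k m) = ∑ m, ∑ k, ∑ i, G i k m := by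
  rw [Finset.sum_comm]
  rw [Finset.sum_congr rfl fun k _ => (Finset.sum_comm : (∑ i, ∑ m, G i k m) = ∑ m, ∑ i, G i k m)]
  exact Finset.sum_comm

private lemma sum_antisymm3 {n : ℕ} (G : Fin n → Fin n → Fin n → ℝ)
    (hG : ∀ a b c, G c b a = -G a b c) : ∑ i, ∑ k, ∑ m, G i k m = 0 := by
  have h2 : (∑ i, ∑ k, ∑ m, G i k m) + (∑ i, ∑ k, ∑ m, G i k m) = 0 := by
    nth_rewrite 2 [triple_comm G]
    show (∑ i, ∑ k, ∑ m, G i k m) + (∑ i, ∑ k, ∑ m, G m k i) = 0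
    rw [← Finset.sum_add_distrib]
    refine Finset.sum_eq_zero fun i _ => ?_
    rw [← Finset.sum_add_distrib]
    refine Finset.sum_eq_zero fun k _ => ?_
    rw [← Finset.sum_add_distrib]
    refine Finset.sum_eq_zero fun m _ => ?_
    rw [hG m k i]; ring
  linarith

private lemma aux_main {n : ℕ} (x P : Fin n → ℝ) (Y h : Fin n → Fin n → ℝ)
    (hh : ∀ a b, h b a = -h a b) (hY : ∀ a b, Y b a = -Y a b)
    (hrel : ∀ k l, x k * P l - x l * P k = ∑ m, (Y m l * h m k - Y m k * h m l)) :
    (∑ i, ∑ k, x k * P i * h k i) = 0 := by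
  have hU : (∑ i, ∑ k, ∑ m, Y m i * h m k * h k i) = 0 := by
    refine sum_antisymm3 (fun i k m => Y m i * h m k * h k i) (fun a b c => ?_)
    show Y a c * h a b * h b c = -(Y c a * h c b * h b a)
    rw [hY c a, hh b a, hh c b]; ring
  have hUV : (∑ i, ∑ k, ((∑ m, Y m i * h m k * h k i) + ∑ m, Y m k * h m i * h k i)) = 0 := by
    refine sum_antisymm (fun i k => (∑ m, Y m i * h m k * h k i) + ∑ m, Y m k * h m i * h k i)
      (fun a b => ?_)
    show ((∑ m, Y m b * h m a * h a b) + ∑ m, Y m a * h m b * h a b)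
        = -((∑ m, Y m a * h m b * h b a) + ∑ m, Y m b * h m a * h b a)
    have e1 : (∑ m, Y m b * h m a * h a b) = -∑ m, Y m b * h m a * h b a := by
      rw [← Finset.sum_neg_distrib]
      refine Finset.sum_congr rfl fun m _ => ?_
      rw [hh b a]; ring
    have e2 : (∑ m, Y m a * h m b * h a b) = -∑ m, Y m a * h m b * h b a := by
      rw [← Finset.sum_neg_distrib]
      refine Finset.sum_congr rfl fun m _ => ?_
      rw [hh b a]; ring
    rw [e1, e2]; ring
  have hV : (∑ i, ∑ k, ∑ m, Y m k * h m i * h k i) = 0 := by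
    simp only [Finset.sum_add_distrib] at hUV
    linarith
  have hT : (∑ i, ∑ k, (∑ m, (Y m i * h m k - Y m k * h m i)) * h k i) = 0 := by
    have expand : ∀ i k : Fin n, (∑ m, (Y m i * h m k - Y m k * h m i)) * h k i
        = (∑ m, Y m i * h m k * h k i) - ∑ m, Y m k * h m i * h k i := by
      intro i k
      rw [Finset.sum_mul, ← Finset.sum_sub_distrib]
      refine Finset.sum_congr rfl fun m _ => ?_
      ring
    calc (∑ i, ∑ k, (∑ m, (Y m i * h m k - Y m k * h m i)) * h k i)
        = ∑ i, ∑ k, ((∑ m, Y m i * h m k * h k i) - ∑ m, Y m k * h m i * h k i) :=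
          Finset.sum_congr rfl fun i _ => Finset.sum_congr rfl fun k _ => expand i k
      _ = (∑ i, ∑ k, ∑ m, Y m i * h m k * h k i)
          - ∑ i, ∑ k, ∑ m, Y m k * h m i * h k i := by
          simp only [Finset.sum_sub_distrib]
      _ = 0 := by rw [hU, hV]; ring
  have hSA : (∑ i, ∑ k, x k * P i * h k i)
      = (∑ i, ∑ k, x i * P k * h k i)
        + ∑ i, ∑ k, (∑ m, (Y m i * h m k - Y m k * h m i)) * h k i := by
    calc (∑ i, ∑ k, x k * P i * h k i)
        = ∑ i, ∑ k, (x i * P k * h k i + (∑ m, (Y m i * h m k - Y m k * h m i)) * h k i) := by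
          refine Finset.sum_congr rfl fun i _ => Finset.sum_congr rfl fun k _ => ?_
          linear_combination (h k i) * (hrel k i)
      _ = _ := by simp only [Finset.sum_add_distrib]
  have hAS0 : (∑ i, ∑ k, (x i * P k * h k i + x k * P i * h k i)) = 0 := by
    refine sum_antisymm (fun i k => x i * P k * h k i + x k * P i * h k i) (fun a b => ?_)
    show x b * P a * h a b + x a * P b * h a b = -(x a * P b * h b a + x b * P a * h b a)
    rw [hh b a]; ring
  simp only [Finset.sum_add_distrib] at hAS0
  linarith

theorem cross_term_vanishes_for_radial {n : ℕ} (f : E n → ℝ) (hf : ContDiff ℝ (⊤ : ℕ∞) f)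
    (hrad : ∀ i j : Fin n, i < j → ∀ q, theta i j f q = 0) (p : E n) :
    ∑ i, px i f p * ((∑ k ∈ univ.filter (fun k => k < i), p.1 k * py k i f p)
      - ∑ k ∈ univ.filter (fun k => i < k), p.1 k * py i k f p) = 0 := by
  classical
  set h : Fin n → Fin n → ℝ := fun a b =>
    if a < b then py a b f p else if b < a then -(py b a f p) else 0 with hdef
  set Y : Fin n → Fin n → ℝ := fun a b =>
    if a < b then p.2 a b else if b < a then -(p.2 b a) else 0 with Ydef
  have hh : ∀ a b, h b a = -h a b := by
    intro a b
    rcases lt_trichotomy a b with hab | rfl | hab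
    · simp [hdef, hab, asymm hab]
    · simp [hdef]
    · simp [hdef, hab, asymm hab]
  have hY : ∀ a b, Y b a = -Y a b := by
    intro a b
    rcases lt_trichotomy a b with hab | rfl | hab
    · simp [Ydef, hab, asymm hab]
    · simp [Ydef]
    · simp [Ydef, hab, asymm hab]
  have hrel' : ∀ k l : Fin n, k < l →
      p.1 k * px l f p - p.1 l * px k f p = ∑ m, (Y m l * h m k - Y m k * h m l) := by
    intro k l hkl
    have ht := hrad k l hkl p
    unfold theta at ht
    have hsum : (∑ m, (Y m l * h m k - Y m k * h m l))
        = (∑ m ∈ univ.filter (fun m => m < k), (p.2 m l * py m k f p - p.2 m k * py m l f p))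
        + (∑ m ∈ univ.filter (fun m => k < m ∧ m < l), (p.2 k m * py m l f p - p.2 m l * py k m f p))
        + (∑ m ∈ univ.filter (fun m => l < m), (p.2 l m * py k m f p - p.2 k m * py l m f p)) := by
      rw [Finset.sum_filter, Finset.sum_filter, Finset.sum_filter,
        ← Finset.sum_add_distrib, ← Finset.sum_add_distrib]
      refine Finset.sum_congr rfl fun m _ => ?_
      rcases lt_trichotomy m k with h1 | rfl | h1
      · have hml : m < l := h1.trans hkl
        simp [hdef, Ydef, h1, hml, asymm h1, asymm hml]
      · simp [hdef, Ydef, lt_irrefl, hkl, asymm hkl]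
      · rcases lt_trichotomy m l with h2 | rfl | h2
        · simp [hdef, Ydef, h1, h2, asymm h1, asymm h2]
          try ring
        · simp [hdef, Ydef, h1, lt_irrefl, asymm h1]
        · have hkm : k < m := hkl.trans h2
          simp [hdef, Ydef, h1, h2, hkm, asymm h1, asymm h2, asymm hkm]
          try ring
    linarith [ht, hsum]
  have hrel : ∀ k l : Fin n, p.1 k * px l f p - p.1 l * px k f p
      = ∑ m, (Y m l * h m k - Y m k * h m l) := by
    intro k l
    rcases lt_trichotomy k l with hkl | rfl | hkl
    · exact hrel' k l hkl
    · simp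
    · have h0 := hrel' l k hkl
      have hneg : (∑ m, (Y m l * h m k - Y m k * h m l))
          = -∑ m, (Y m k * h m l - Y m l * h m k) := by
        rw [← Finset.sum_neg_distrib]
        exact Finset.sum_congr rfl fun m _ => by ring
      rw [hneg, ← h0]; ring
  have hmain := aux_main p.1 (fun i => px i f p) Y h hh hY hrel
  have hgoal : ∀ i : Fin n,
      px i f p * ((∑ k ∈ univ.filter (fun k => k < i), p.1 k * py k i f p)
        - ∑ k ∈ univ.filter (fun k => i < k), p.1 k * py i k f p)
      = ∑ k, p.1 k * px i f p * h k i := by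
    intro i
    have step : ∀ k : Fin n, p.1 k * px i f p * h k i
        = (if k < i then px i f p * (p.1 k * py k i f p) else 0)
          - (if i < k then px i f p * (p.1 k * py i k f p) else 0) := by
      intro k
      rcases lt_trichotomy k i with h1 | rfl | h1
      · simp [hdef, h1, asymm h1]
        try ring
      · simp [hdef, lt_irrefl]
      · simp [hdef, h1, asymm h1]
        try ring
    calc px i f p * ((∑ k ∈ univ.filter (fun k => k < i), p.1 k * py k i f p)
          - ∑ k ∈ univ.filter (fun k => i < k), p.1 k * py i k f p)
        = (∑ k ∈ univ.filter (fun k => k < i), px i f p * (p.1 k * py k i f p))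
          - ∑ k ∈ univ.filter (fun k => i < k), px i f p * (p.1 k * py i k f p) := by
          rw [mul_sub, Finset.mul_sum, Finset.mul_sum]
      _ = (∑ k, if k < i then px i f p * (p.1 k * py k i f p) else 0)
          - ∑ k, if i < k then px i f p * (p.1 k * py i k f p) else 0 := by
          rw [Finset.sum_filter, Finset.sum_filter]
      _ = ∑ k, ((if k < i then px i f p * (p.1 k * py k i f p) else 0)
          - if i < k then px i f p * (p.1 k * py i k f p) else 0) :=
          (Finset.sum_sub_distrib _ _).symm
      _ = ∑ k, p.1 k * px i f p * h k i :=
          Finset.sum_congr rfl fun k _ => (step k).symm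
  calc ∑ i, px i f p * ((∑ k ∈ univ.filter (fun k => k < i), p.1 k * py k i f p)
        - ∑ k ∈ univ.filter (fun k => i < k), p.1 k * py i k f p)
      = ∑ i, ∑ k, p.1 k * px i f p * h k i := Finset.sum_congr rfl fun i _ => hgoal i
    _ = 0 := hmain
end

section
/- A smooth function f on ℝ^{n + n(n−1)/2} is radial (θ_{ij} f = 0 for all 1 ≤ i < j ≤ n) if and only if θ_{1k} f = 0 for all 1 < k ≤ n. -/
open Finset

noncomputable section
namespace RadialAux
open Finset
variable {n : ℕ}

def exv (i : Fin n) : E n := (Pi.single i 1, 0)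
def eyv (k l : Fin n) : E n := (0, Pi.single k (Pi.single l 1))

/-- The coefficient vector of the rotation field θ_{ij} at `p`. -/
def vvec (i j : Fin n) (p : E n) : E n :=
  (p.1 j • exv i - p.1 i • exv j)
  + (∑ k ∈ univ.filter (fun k => k < i), (p.2 k j • eyv k i - p.2 k i • eyv k j))
  + (∑ k ∈ univ.filter (fun k => i < k ∧ k < j), (p.2 i k • eyv k j - p.2 k j • eyv i k))
  + (∑ k ∈ univ.filter (fun k => j < k), (p.2 j k • eyv i k - p.2 i k • eyv j k))

lemma theta_eq (i j : Fin n) (f : E n → ℝ) (p : E n) :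
    theta i j f p = fderiv ℝ f p (vvec i j p) := by
  have h1 : ∀ (c d : ℝ) (u v : Fin n → ℝ),
      (fderiv ℝ f p) ((c • u - d • v, 0) : E n)
        = c * (fderiv ℝ f p) ((u, 0) : E n) - d * (fderiv ℝ f p) ((v, 0) : E n) := by
    intro c d u v
    have : ((c • u - d • v, 0) : E n) = c • ((u, 0) : E n) - d • ((v, 0) : E n) := by
      ext <;> simp
    rw [this, map_sub, map_smul, map_smul, smul_eq_mul, smul_eq_mul]
  have h2 : ∀ (c d : ℝ) (u v : Fin n → Fin n → ℝ),
      (fderiv ℝ f p) ((0, c • u - d • v) : E n)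
        = c * (fderiv ℝ f p) ((0, u) : E n) - d * (fderiv ℝ f p) ((0, v) : E n) := by
    intro c d u v
    have : ((0, c • u - d • v) : E n) = c • ((0, u) : E n) - d • ((0, v) : E n) := by
      ext <;> simp
    rw [this, map_sub, map_smul, map_smul, smul_eq_mul, smul_eq_mul]
  simp [theta, px, py, vvec, exv, eyv, h1, h2, Finset.sum_sub_distrib]

def Vlin (i j : Fin n) : E n →ₗ[ℝ] E n where
  toFun := vvec i j
  map_add' p q := by
    simp only [vvec, Prod.fst_add, Prod.snd_add, Pi.add_apply, add_smul,
      add_sub_add_comm, Finset.sum_add_distrib]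
    abel
  map_smul' c p := by
    simp only [vvec, Prod.smul_fst, Prod.smul_snd, Pi.smul_apply, smul_eq_mul,
      mul_smul, RingHom.id_apply, ← smul_sub, ← Finset.smul_sum, ← smul_add]

def Vc (i j : Fin n) : E n →L[ℝ] E n := (Vlin i j).toContinuousLinearMap

@[simp] lemma Vc_apply (i j : Fin n) (p : E n) : Vc i j p = vvec i j p := rfl

lemma vvec_fst (i j : Fin n) (p : E n) (a : Fin n) :
    (vvec i j p).1 a = (if a = i then p.1 j else 0) - (if a = j then p.1 i else 0) := by
  simp [vvec, exv, eyv, Pi.single_apply, Prod.fst_sum]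

/-- full antisymmetric extension of the upper-triangular data -/
def extA (y : Fin n → Fin n → ℝ) (a b : Fin n) : ℝ :=
  if a < b then y a b else if b < a then -(y b a) else 0

/-- `ad`-action of the rotation generator `L_{ij}` on matrices. -/
def Cc (i j : Fin n) (Y : Fin n → Fin n → ℝ) (a b : Fin n) : ℝ :=
  (if a = i then Y j b else 0) - (if a = j then Y i b else 0)
  - (if b = j then Y a i else 0) + (if b = i then Y a j else 0)

set_option maxHeartbeats 8000000 in
lemma vvec_snd (i j : Fin n) (hij : i < j) (p : E n) (a b : Fin n) :
    (vvec i j p).2 a b = if a < b then Cc i j (extA p.2) a b else 0 := by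
  simp only [vvec, Prod.snd_add, Prod.snd_sub, Prod.fst_sub, Pi.add_apply, Pi.sub_apply,
    exv, eyv, Prod.smul_snd, Prod.smul_fst, smul_zero, Pi.smul_apply, smul_eq_mul,
    Prod.snd_sum, Finset.sum_sub_distrib, Finset.sum_apply, Pi.single_apply, mul_ite, mul_one, mul_zero,
    Finset.sum_ite_eq, Finset.mem_filter, Finset.mem_univ, true_and, Pi.zero_apply]
  simp only [ite_apply, Pi.zero_apply, Pi.single_apply, mul_ite, mul_one, mul_zero,
    Finset.sum_ite_irrel, Finset.sum_ite_eq, Finset.sum_const_zero, Finset.mem_filter,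
    Finset.mem_univ, true_and]
  simp only [Cc, extA]
  split_ifs <;> first | (exfalso; omega) | (subst_vars; ring)


lemma extA_antisymm (y : Fin n → Fin n → ℝ) (a b : Fin n) : extA y b a = - extA y a b := by
  rcases lt_trichotomy a b with h | rfl | h
  · simp [extA, h, asymm h]
  · simp [extA]
  · simp [extA, h, asymm h]

lemma Cc_antisymm (i j : Fin n) (Y : Fin n → Fin n → ℝ) (hY : ∀ a b, Y b a = - Y a b)
    (a b : Fin n) : Cc i j Y b a = - Cc i j Y a b := by
  simp only [Cc]
  rw [hY a j, hY a i, hY i b, hY j b]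
  split_ifs <;> ring

lemma extA_restrict (M : Fin n → Fin n → ℝ) (hM : ∀ a b, M b a = - M a b)
    (y : Fin n → Fin n → ℝ) (hy : ∀ a b, y a b = if a < b then M a b else 0) (a b : Fin n) :
    extA y a b = M a b := by
  rcases lt_trichotomy a b with h | rfl | h
  · simp [extA, hy, h]
  · have h0 := hM a a
    simp [extA, hy]
    linarith
  · simp only [extA, hy, if_neg (asymm h), if_pos h]
    rw [hM a b]
    simp [asymm h, h]

lemma Cc_comm (z i j : Fin n) (hzi : z < i) (hij : i < j) (Y : Fin n → Fin n → ℝ)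
    (a b : Fin n) :
    Cc z j (Cc z i Y) a b - Cc z i (Cc z j Y) a b = Cc i j Y a b := by
  have h1 : j ≠ z := (hzi.trans hij).ne'
  have h2 : i ≠ z := hzi.ne'
  have h3 : j ≠ i := hij.ne'
  have h4 : z ≠ i := hzi.ne
  have h5 : z ≠ j := (hzi.trans hij).ne
  have h6 : i ≠ j := hij.ne
  simp only [Cc, h1, h2, h3, h4, h5, h6, if_false]
  split_ifs <;> first | (exfalso; omega) | (subst_vars; ring)

lemma comm_vvec (z i j : Fin n) (hzi : z < i) (hij : i < j) (p : E n) :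
    vvec z j (vvec z i p) - vvec z i (vvec z j p) = vvec i j p := by
  have hzj : z < j := hzi.trans hij
  have e1 : extA ((vvec z i p).2) = Cc z i (extA p.2) :=
    funext fun u => funext fun v =>
      extA_restrict _ (Cc_antisymm z i _ (extA_antisymm p.2)) _ (vvec_snd z i hzi p) u v
  have e2 : extA ((vvec z j p).2) = Cc z j (extA p.2) :=
    funext fun u => funext fun v =>
      extA_restrict _ (Cc_antisymm z j _ (extA_antisymm p.2)) _ (vvec_snd z j hzj p) u v
  refine Prod.ext ?_ ?_
  · funext a
    simp only [Prod.fst_sub, Pi.sub_apply, vvec_fst]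
    split_ifs <;> first | (exfalso; omega) | (subst_vars; ring)
  · funext a b
    simp only [Prod.snd_sub, Pi.sub_apply]
    rw [vvec_snd z j hzj, vvec_snd z i hzi, vvec_snd i j hij, e1, e2]
    split_ifs with h
    · exact Cc_comm z i j hzi hij (extA p.2) a b
    · ring


lemma theta_vanish (f : E n → ℝ) (hf : ContDiff ℝ (⊤ : ℕ∞) f) (z i j : Fin n)
    (hzi : z < i) (hij : i < j)
    (hi : ∀ q, theta z i f q = 0) (hj : ∀ q, theta z j f q = 0) (p : E n) :
    theta i j f p = 0 := by
  have hder : Differentiable ℝ (fderiv ℝ f) :=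
    (hf.fderiv_right ((by exact_mod_cast le_top) : ((⊤ : ℕ∞) : WithTop ℕ∞) + 1 ≤ _)).differentiable (by simp)
  have key : ∀ (k l : Fin n), (∀ q, theta k l f q = 0) → ∀ w : E n,
      fderiv ℝ f p (vvec k l w) + fderiv ℝ (fderiv ℝ f) p w (vvec k l p) = 0 := by
    intro k l h0 w
    have hz : (fun q => fderiv ℝ f q (Vc k l q)) = fun _ => (0:ℝ) := by
      funext q
      rw [Vc_apply, ← theta_eq]
      exact h0 q
    have e0 : fderiv ℝ (fun q => fderiv ℝ f q (Vc k l q)) p = 0 := by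
      rw [hz]; exact fderiv_const_apply 0
    have e1 : fderiv ℝ (fun q => fderiv ℝ f q (Vc k l q)) p
        = (fderiv ℝ f p).comp (Vc k l) + (fderiv ℝ (fderiv ℝ f) p).flip (Vc k l p) := by
      have hu : DifferentiableAt ℝ (fun q : E n => Vc k l q) p :=
        (Vc k l).differentiableAt
      have hc : DifferentiableAt ℝ (fderiv ℝ f) p := hder p
      have := fderiv_clm_apply hc hu
      rw [this]
      congr 1
      · congr 1
        exact (Vc k l).fderiv
    have := congrArg (fun (L : E n →L[ℝ] ℝ) => L w) (e1.symm.trans e0)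
    simpa using this
  have Hj := key z j hj (vvec z i p)
  have Hi := key z i hi (vvec z j p)
  have hsymm : fderiv ℝ (fderiv ℝ f) p (vvec z i p) (vvec z j p)
      = fderiv ℝ (fderiv ℝ f) p (vvec z j p) (vvec z i p) :=
    (hf.contDiffAt.isSymmSndFDerivAt (by rw [minSmoothness_of_isRCLikeNormedField]; exact WithTop.coe_le_coe.mpr le_top)).eq _ _
  have hcomm := comm_vvec z i j hzi hij p
  rw [theta_eq]
  have : fderiv ℝ f p (vvec i j p)
      = fderiv ℝ f p (vvec z j (vvec z i p)) - fderiv ℝ f p (vvec z i (vvec z j p)) := by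
    rw [← map_sub, hcomm]
  rw [this]
  linarith

end RadialAux
end
theorem radial_iff_first_row {n : ℕ} (hn : 0 < n) (f : E n → ℝ) (hf : ContDiff ℝ (⊤ : ℕ∞) f) :
    (∀ i j : Fin n, i < j → ∀ q, theta i j f q = 0) ↔
    (∀ k : Fin n, (⟨0, hn⟩ : Fin n) < k → ∀ q, theta ⟨0, hn⟩ k f q = 0) := by
  constructor
  · intro h k hk q
    exact h _ k hk q
  · intro h i j hij q
    by_cases hi : i = (⟨0, hn⟩ : Fin n)
    · subst hi
      exact h j hij q
    · have hzi : (⟨0, hn⟩ : Fin n) < i := by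
        have hne : (i : ℕ) ≠ 0 := fun e => hi (Fin.ext e)
        simp only [Fin.lt_def]
        omega
      exact RadialAux.theta_vanish f hf _ i j hzi hij (h i hzi) (h j (hzi.trans hij)) q
end

section
/- For smooth functions f on ℝ^{n + n(n−1)/2}, the iterated carré du champ satisfies Γ₂(f,f) := (1/2)(Δ Γ(f,f) − 2 Γ(f, Δf)) = ∑_{i,j=1}^n (X_i X_j f)² + 2 ∑_{1≤i<j≤n} [ (X_j f)(X_i Y_{ij} f) − (X_i f)(X_j Y_{ij} f) ], where Y_{ij} := [X_i, X_j] = ∂_{y_{ij}}. -/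
open Finset

noncomputable section
-- auxiliary development
namespace G2

variable {n : ℕ}

def coordCLM (k : Fin n) : E n →L[ℝ] ℝ :=
  (ContinuousLinearMap.proj k).comp (ContinuousLinearMap.fst ℝ (Fin n → ℝ) (Fin n → Fin n → ℝ))

@[simp] lemma coordCLM_apply (k : Fin n) (v : E n) : coordCLM k v = v.1 k := rfl

def exi (i : Fin n) : E n := (Pi.single i 1, 0)
def eY (k l : Fin n) : E n := (0, Pi.single k (Pi.single l 1))

def M (i : Fin n) : E n →L[ℝ] E n :=
  (∑ k ∈ univ.filter (fun k => k < i), (1/2 : ℝ) • (coordCLM k).smulRight (eY k i))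
  - ∑ k ∈ univ.filter (fun k => i < k), (1/2 : ℝ) • (coordCLM k).smulRight (eY i k)

lemma M_apply (i : Fin n) (v : E n) :
    M i v = (∑ k ∈ univ.filter (fun k => k < i), ((1/2 : ℝ) * v.1 k) • eY k i)
      - ∑ k ∈ univ.filter (fun k => i < k), ((1/2 : ℝ) * v.1 k) • eY i k := by
  simp [M, ContinuousLinearMap.sum_apply, smul_smul]

def V (i : Fin n) (p : E n) : E n := exi i + M i p

lemma X_eq (i : Fin n) (f : E n → ℝ) (p : E n) : X i f p = fderiv ℝ f p (V i p) := by
  simp only [V, M_apply, map_add, map_sub, map_sum, map_smul, smul_eq_mul]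
  simp only [X, px, py, exi, eY, mul_sub, Finset.mul_sum, mul_assoc]

lemma hasFDerivAt_V (i : Fin n) (p : E n) : HasFDerivAt (V i) (M i) p :=
  (M i).hasFDerivAt.const_add (exi i)

lemma contDiff_V (i : Fin n) : ContDiff ℝ (⊤ : ℕ∞) (V i : E n → E n) :=
  contDiff_const.add (M i).contDiff

lemma contDiff_X {f : E n → ℝ} (hf : ContDiff ℝ (⊤ : ℕ∞) f) (i : Fin n) : ContDiff ℝ (⊤ : ℕ∞) (X i f) := by
  have h : X i f = fun p => fderiv ℝ f p (V i p) := funext (X_eq i f)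
  rw [h]
  exact (hf.fderiv_right (by simp)).clm_apply (contDiff_V i)

lemma contDiff_Yf {f : E n → ℝ} (hf : ContDiff ℝ (⊤ : ℕ∞) f) (a b : Fin n) :
    ContDiff ℝ (⊤ : ℕ∞) (Yf a b f) := by
  have h : Yf a b f = fun p => fderiv ℝ f p (eY a b) := rfl
  rw [h]
  exact (hf.fderiv_right (by simp)).clm_apply contDiff_const

lemma diffAt_X {f : E n → ℝ} (hf : ContDiff ℝ (⊤ : ℕ∞) f) (i : Fin n) (p : E n) :
    DifferentiableAt ℝ (X i f) p :=
  ((contDiff_X hf i).differentiable (by simp)).differentiableAt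

lemma hasFDerivAt_fderiv {f : E n → ℝ} (hf : ContDiff ℝ (⊤ : ℕ∞) f) (p : E n) :
    HasFDerivAt (fderiv ℝ f) (fderiv ℝ (fderiv ℝ f) p) p :=
  (((hf.fderiv_right (m := (⊤ : ℕ∞)) (by simp)).differentiable (by simp)) p).hasFDerivAt

lemma XX_eq {f : E n → ℝ} (hf : ContDiff ℝ (⊤ : ℕ∞) f) (i j : Fin n) (p : E n) :
    X i (X j f) p
      = fderiv ℝ (fderiv ℝ f) p (V i p) (V j p) + fderiv ℝ f p (M j (V i p)) := by
  have hXj : X j f = fun q => fderiv ℝ f q (V j q) := funext (X_eq j f)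
  rw [X_eq, hXj]
  rw [((hasFDerivAt_fderiv hf p).clm_apply (hasFDerivAt_V j p)).fderiv]
  simp only [ContinuousLinearMap.add_apply, ContinuousLinearMap.coe_comp', Function.comp_apply,
    ContinuousLinearMap.flip_apply]
  ring

lemma symm2 {f : E n → ℝ} (hf : ContDiff ℝ (⊤ : ℕ∞) f) (p : E n) (v w : E n) :
    fderiv ℝ (fderiv ℝ f) p v w = fderiv ℝ (fderiv ℝ f) p w v :=
  (hf.contDiffAt.isSymmSndFDerivAt (by rw [minSmoothness_of_isRCLikeNormedField]; exact WithTop.coe_le_coe.mpr (le_top : (2 : ℕ∞) ≤ ⊤))) v w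

lemma M_fst (i : Fin n) (v : E n) : (M i v).1 = 0 := by
  simp [M_apply, eY, Prod.fst_sum]

lemma M_of_fst_zero (i : Fin n) {v : E n} (hv : v.1 = 0) : M i v = 0 := by
  simp [M_apply, hv]

lemma M_eY (i a b : Fin n) : M i (eY a b) = 0 := M_of_fst_zero i rfl

lemma M_V (i j : Fin n) (p : E n) : M j (V i p) = M j (exi i) := by
  rw [V, map_add, M_of_fst_zero j (M_fst i p), add_zero]

lemma M_exi_lt {i j : Fin n} (h : i < j) : M j (exi i) = (2⁻¹ : ℝ) • eY i j := by
  simp only [M_apply, exi, Pi.single_apply, mul_ite, mul_one, mul_zero, ite_smul, zero_smul]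
  rw [Finset.sum_ite_eq' , Finset.sum_ite_eq']
  simp [h, h.asymm, one_div]

lemma M_exi_gt {i j : Fin n} (h : j < i) : M j (exi i) = -((2⁻¹ : ℝ) • eY j i) := by
  simp only [M_apply, exi, Pi.single_apply, mul_ite, mul_one, mul_zero, ite_smul, zero_smul]
  rw [Finset.sum_ite_eq' , Finset.sum_ite_eq']
  simp [h, h.asymm, one_div]

lemma Yf_eq (a b : Fin n) (f : E n → ℝ) (p : E n) : Yf a b f p = fderiv ℝ f p (eY a b) := rfl

/-- The commutator `[X_i, X_j] = Y_{ij}` for `i < j`. -/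
lemma comm_lt {f : E n → ℝ} (hf : ContDiff ℝ (⊤ : ℕ∞) f) {i j : Fin n} (h : i < j) (q : E n) :
    X i (X j f) q = X j (X i f) q + Yf i j f q := by
  rw [XX_eq hf, XX_eq hf, symm2 hf q (V j q) (V i q), M_V, M_V, M_exi_lt h, M_exi_gt h,
    Yf_eq, map_neg, map_smul]
  simp only [smul_eq_mul]
  ring

/-- `X` commutes with `Y`. -/
lemma commY {f : E n → ℝ} (hf : ContDiff ℝ (⊤ : ℕ∞) f) (k a b : Fin n) (q : E n) :
    X k (Yf a b f) q = Yf a b (X k f) q := by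
  have hY : Yf a b f = fun r => fderiv ℝ f r (eY a b) := rfl
  have hX : X k f = fun r => fderiv ℝ f r (V k r) := funext (X_eq k f)
  have h1 : HasFDerivAt (fun r => fderiv ℝ f r (eY a b))
      ((fderiv ℝ (fderiv ℝ f) q).flip (eY a b)) q := by
    have := (hasFDerivAt_fderiv hf q).clm_apply (hasFDerivAt_const (eY a b) q)
    simpa using this
  rw [X_eq, hY, h1.fderiv, Yf_eq, hX,
    ((hasFDerivAt_fderiv hf q).clm_apply (hasFDerivAt_V k q)).fderiv]
  simp only [ContinuousLinearMap.flip_apply, ContinuousLinearMap.add_apply,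
    ContinuousLinearMap.coe_comp', Function.comp_apply, M_eY, map_zero]
  rw [symm2 hf q (eY a b) (V k q)]
  ring

-- linearity / product rules
lemma X_add {f g : E n → ℝ} {p : E n} (hf : DifferentiableAt ℝ f p)
    (hg : DifferentiableAt ℝ g p) (i : Fin n) :
    X i (fun q => f q + g q) p = X i f p + X i g p := by
  rw [X_eq, X_eq, X_eq, fderiv_fun_add hf hg]; rfl

lemma X_sum {ι : Type*} (s : Finset ι) (g : ι → E n → ℝ) {p : E n}
    (hg : ∀ j ∈ s, DifferentiableAt ℝ (g j) p) (i : Fin n) :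
    X i (fun q => ∑ j ∈ s, g j q) p = ∑ j ∈ s, X i (g j) p := by
  rw [X_eq, fderiv_fun_sum hg, ContinuousLinearMap.sum_apply]
  exact Finset.sum_congr rfl fun j _ => (X_eq i (g j) p).symm

lemma X_mul {f g : E n → ℝ} {p : E n} (hf : DifferentiableAt ℝ f p)
    (hg : DifferentiableAt ℝ g p) (i : Fin n) :
    X i (fun q => f q * g q) p = X i f p * g p + f p * X i g p := by
  rw [X_eq, X_eq, X_eq, fderiv_fun_mul hf hg]
  simp only [ContinuousLinearMap.add_apply, ContinuousLinearMap.smul_apply, smul_eq_mul]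
  ring

lemma X_const_mul {f : E n → ℝ} {p : E n} (hf : DifferentiableAt ℝ f p) (c : ℝ) (i : Fin n) :
    X i (fun q => c * f q) p = c * X i f p := by
  rw [X_eq, X_eq, fderiv_const_mul hf]
  simp

lemma X_neg (f : E n → ℝ) (p : E n) (i : Fin n) :
    X i (fun q => -(f q)) p = -(X i f p) := by
  rw [X_eq, X_eq, fderiv_fun_neg]
  simp

lemma third_lt {f : E n → ℝ} (hf : ContDiff ℝ (⊤ : ℕ∞) f) {i j : Fin n} (h : i < j) (p : E n) :
    X i (X i (X j f)) p - X j (X i (X i f)) p = 2 * X i (Yf i j f) p := by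
  have hXi : ContDiff ℝ (⊤ : ℕ∞) (X i f) := contDiff_X hf i
  have h1 : X i (X j f) = fun q => X j (X i f) q + Yf i j f q := funext (comm_lt hf h)
  have e1 : X i (X i (X j f)) p = X i (X j (X i f)) p + X i (Yf i j f) p := by
    rw [h1, X_add (diffAt_X hXi j p) (((contDiff_Yf hf i j).differentiable (by simp)) p)]
  have e2 : X i (X j (X i f)) p = X j (X i (X i f)) p + Yf i j (X i f) p := comm_lt hXi h p
  have e3 : X i (Yf i j f) p = Yf i j (X i f) p := commY hf i i j p
  linarith

lemma third_gt {f : E n → ℝ} (hf : ContDiff ℝ (⊤ : ℕ∞) f) {i j : Fin n} (h : j < i) (p : E n) :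
    X i (X i (X j f)) p - X j (X i (X i f)) p = -(2 * X i (Yf j i f) p) := by
  have hXi : ContDiff ℝ (⊤ : ℕ∞) (X i f) := contDiff_X hf i
  have h1 : X i (X j f) = fun q => X j (X i f) q + (-(Yf j i f q)) := by
    funext q
    have := comm_lt hf h q
    linarith
  have e1 : X i (X i (X j f)) p = X i (X j (X i f)) p + X i (fun q => -(Yf j i f q)) p := by
    rw [h1, X_add (diffAt_X hXi j p) (((contDiff_Yf hf j i).neg.differentiable (by simp)) p)]
  have e1' : X i (fun q => -(Yf j i f q)) p = -(X i (Yf j i f) p) := X_neg _ _ _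
  have e2 : X j (X i (X i f)) p = X i (X j (X i f)) p + Yf j i (X i f) p := comm_lt hXi h p
  have e3 : X i (Yf j i f) p = Yf j i (X i f) p := commY hf i j i p
  linarith

end G2
end

open G2 in
theorem Gamma2_formula {n : ℕ} (f : E n → ℝ) (hf : ContDiff ℝ (⊤ : ℕ∞) f) (p : E n) :
    (1/2) * (subL (fun q => ∑ i, (X i f q)^2) p - 2 * ∑ i, X i f p * X i (subL f) p)
      = (∑ i, ∑ j, (X i (X j f) p)^2)
        + 2 * ∑ i, ∑ j ∈ univ.filter (fun j => i < j),
            (X j f p * X i (Yf i j f) p - X i f p * X j (Yf i j f) p) := by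
  classical
  have hd : ∀ (g : E n → ℝ), ContDiff ℝ (⊤ : ℕ∞) g → ∀ q, DifferentiableAt ℝ g q :=
    fun g hg q => (hg.differentiable (by simp)).differentiableAt
  have hX1 : ∀ j, ContDiff ℝ (⊤ : ℕ∞) (X j f) := fun j => contDiff_X hf j
  have hX2 : ∀ i j : Fin n, ContDiff ℝ (⊤ : ℕ∞) (X i (X j f)) :=
    fun i j => contDiff_X (hX1 j) i
  -- Step A
  have stepA : ∀ (i : Fin n) (q : E n), X i (fun r => ∑ j, (X j f r)^2) q
      = ∑ j, (2 * X j f q) * (X i (X j f) q) := by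
    intro i q
    rw [X_sum univ (fun j r => (X j f r)^2) (fun j _ => (hd _ (hX1 j) q).pow 2) i]
    refine Finset.sum_congr rfl fun j _ => ?_
    have hpow : (fun r => (X j f r)^2) = fun r => X j f r * X j f r := by
      funext r; ring
    rw [hpow, X_mul (hd _ (hX1 j) q) (hd _ (hX1 j) q)]
    ring
  -- Step B
  have stepB : ∀ i : Fin n, X i (X i (fun r => ∑ j, (X j f r)^2)) p
      = ∑ j, (2 * (X i (X j f) p)^2 + 2 * X j f p * X i (X i (X j f)) p) := by
    intro i
    have h1 : X i (fun r => ∑ j, (X j f r)^2)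
        = fun q => ∑ j, (2 * X j f q) * (X i (X j f) q) := funext (stepA i)
    rw [h1, X_sum univ (fun j q => (2 * X j f q) * (X i (X j f) q)) (fun j _ => ((hd _ (hX1 j) p).const_mul 2).mul (hd _ (hX2 i j) p)) i]
    refine Finset.sum_congr rfl fun j _ => ?_
    rw [X_mul ((hd _ (hX1 j) p).const_mul 2) (hd _ (hX2 i j) p), X_const_mul (hd _ (hX1 j) p) 2]
    ring
  have hsubL : subL (fun q => ∑ i, (X i f q)^2) p
      = ∑ i, ∑ j, (2 * (X i (X j f) p)^2 + 2 * X j f p * X i (X i (X j f)) p) :=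
    Finset.sum_congr rfl fun i _ => stepB i
  -- Step D
  have stepD : ∀ i : Fin n, X i (subL f) p = ∑ j, X i (X j (X j f)) p := by
    intro i
    have h1 : subL f = fun q => ∑ j, X j (X j f) q := rfl
    rw [h1, X_sum univ _ (fun j _ => hd _ (hX2 j j) p) i]
  have hQ : ∑ i, X i f p * X i (subL f) p
      = ∑ i, ∑ j, X i f p * X i (X j (X j f)) p := by
    refine Finset.sum_congr rfl fun i _ => ?_
    rw [stepD i, Finset.mul_sum]
  have hswap : ∑ i, ∑ j, X i f p * X i (X j (X j f)) p
      = ∑ i, ∑ j, X j f p * X j (X i (X i f)) p := Finset.sum_comm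
  -- key pointwise identity
  have key : ∀ i j : Fin n,
      X j f p * X i (X i (X j f)) p - X j f p * X j (X i (X i f)) p
      = (if i < j then 2 * X j f p * X i (Yf i j f) p else 0)
        + (if j < i then -(2 * X j f p * X i (Yf j i f) p) else 0) := by
    intro i j
    rcases lt_trichotomy i j with h | h | h
    · rw [if_pos h, if_neg h.asymm, add_zero]
      linear_combination X j f p * third_lt hf h p
    · subst h; simp
    · rw [if_neg h.asymm, if_pos h, zero_add]
      linear_combination X j f p * third_gt hf h p
  -- assemble
  set SA := ∑ i, ∑ j, (X i (X j f) p)^2 with hSA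
  set SC := ∑ i, ∑ j, X j f p * X i (X i (X j f)) p with hSC
  set SD := ∑ i, ∑ j, X j f p * X j (X i (X i f)) p with hSD
  have e1 : ∑ i, ∑ j, (2 * (X i (X j f) p)^2 + 2 * X j f p * X i (X i (X j f)) p)
      = 2 * SA + 2 * SC := by
    rw [hSA, hSC, Finset.mul_sum, Finset.mul_sum, ← Finset.sum_add_distrib]
    refine Finset.sum_congr rfl fun i _ => ?_
    rw [Finset.mul_sum, Finset.mul_sum, ← Finset.sum_add_distrib]
    exact Finset.sum_congr rfl fun j _ => by ring
  have e2 : SC - SD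
      = 2 * ∑ i, ∑ j ∈ univ.filter (fun j => i < j),
          (X j f p * X i (Yf i j f) p - X i f p * X j (Yf i j f) p) := by
    have t1 : SC - SD
        = ∑ i, ∑ j, ((if i < j then 2 * X j f p * X i (Yf i j f) p else 0)
            + (if j < i then -(2 * X j f p * X i (Yf j i f) p) else 0)) := by
      rw [hSC, hSD, ← Finset.sum_sub_distrib]
      refine Finset.sum_congr rfl fun i _ => ?_
      rw [← Finset.sum_sub_distrib]
      exact Finset.sum_congr rfl fun j _ => key i j
    have t2 : ∑ i : Fin n, ∑ j : Fin n,
        (if j < i then -(2 * X j f p * X i (Yf j i f) p) else 0)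
        = ∑ i : Fin n, ∑ j : Fin n,
        (if i < j then -(2 * X i f p * X j (Yf i j f) p) else 0) := Finset.sum_comm
    have hsplit : ∀ (u w : Fin n → Fin n → ℝ),
        (∑ i, ∑ j, (u i j + w i j)) = (∑ i, ∑ j, u i j) + ∑ i, ∑ j, w i j := by
      intro u w
      rw [← Finset.sum_add_distrib]
      exact Finset.sum_congr rfl fun i _ => Finset.sum_add_distrib
    rw [t1, hsplit, t2, ← hsplit, Finset.mul_sum]
    refine Finset.sum_congr rfl fun i _ => ?_
    rw [Finset.sum_filter, Finset.mul_sum]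
    refine Finset.sum_congr rfl fun j _ => ?_
    by_cases h : i < j
    · simp only [if_pos h]; ring
    · simp only [if_neg h]; ring
  rw [hsubL, e1, hQ, hswap]
  linear_combination e2
end
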